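/- arXiv:2603.13542 — 4 statements merged into one kernel-verified Lean document; each statement's English description precedes it below -/
import Mathlib

section
/- Let d be a positive integer, α > 0, and let A and B be symmetric real d×d matrices. Then E[(tr(A) − ZᵀAZ)(tr(B) − ZᵀBZ) exp(-α ZᵀZ)] = (1+2α)^{-(d/2+2)} ( 4α² tr(A) tr(B) + 2 tr(AB) ), where the expectation is the normalized Gaussian integral (2π)^{-d/2} ∫_{ℝ^d} (tr(A) − zᵀAz)(tr(B) − zᵀBz) exp(-α ‖z‖²) exp(-‖z‖²/2) dz. -/
/-!
Write `g(x) = exp (-b ‖x‖²)` with `b = α + 1/2`, so that the integrand is a polynomial times `g`.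
Integrating by parts against `g` gives Stein's identity
`∫ xᵢ F g = (2b)⁻¹ ∫ ∂ᵢF g` for `F` of temperate growth. Applied to `F = xⱼ` and
`F = xⱼ xₖ xₗ` it yields the second moments `(2b)⁻¹ δᵢⱼ ∫ g` and Isserlis' formula
`∫ xᵢ xⱼ xₖ xₗ g = (2b)⁻² (δᵢⱼδₖₗ + δᵢₖδⱼₗ + δᵢₗδⱼₖ) ∫ g`. Contracting with `Aᵢⱼ Bₖₗ` gives
`∫ (tr A - zᵀAz)(tr B - zᵀBz) g = ((1 - c)² tr A tr B + c² (tr (ABᵀ) + tr (AB))) ∫ g` with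
`c = (2b)⁻¹ = (1 + 2α)⁻¹`, and `(2π)^{-d/2} ∫ g = (1 + 2α)^{-d/2}`.
-/

open MeasureTheory Matrix Real Function

lemma integral_sum_sum {ι κ α : Type*} [Fintype ι] [Fintype κ] [MeasurableSpace α]
    {μ : Measure α} {f : ι → κ → α → ℝ} (hf : ∀ i j, Integrable (f i j) μ) :
    ∫ x, ∑ i, ∑ j, f i j x ∂μ = ∑ i, ∑ j, ∫ x, f i j x ∂μ := by
  rw [integral_finsetSum _ fun i _ => integrable_finsetSum _ fun j _ => hf i j]
  exact Finset.sum_congr rfl fun i _ => integral_finsetSum _ fun j _ => hf i j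

lemma integral_sub_mul_sub_mul {α : Type*} [MeasurableSpace α] {μ : Measure α}
    {f h w : α → ℝ} (a c : ℝ) (hw : Integrable w μ) (hfw : Integrable (fun x => f x * w x) μ)
    (hhw : Integrable (fun x => h x * w x) μ) (hfhw : Integrable (fun x => f x * h x * w x) μ) :
    ∫ x, (a - f x) * (c - h x) * w x ∂μ =
      a * c * ∫ x, w x ∂μ - a * ∫ x, h x * w x ∂μ - c * ∫ x, f x * w x ∂μ
        + ∫ x, f x * h x * w x ∂μ := by
  have h₀ : Integrable (fun x => a * c * w x - a * (h x * w x)) μ :=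
    (hw.const_mul _).sub (hhw.const_mul _)
  have h₁ : Integrable (fun x => a * c * w x - a * (h x * w x) - c * (f x * w x)) μ :=
    h₀.sub (hfw.const_mul _)
  calc _ = ∫ x, a * c * w x - a * (h x * w x) - c * (f x * w x) + f x * h x * w x ∂μ := by
        congr with x
        ring
    _ = _ := by
        rw [integral_add h₁ hfhw, integral_sub h₀ (hfw.const_mul _),
          integral_sub (hw.const_mul _) (hhw.const_mul _), integral_const_mul,
          integral_const_mul, integral_const_mul]

lemma one_add_pow_mul_exp_neg_mul_sq_le {b : ℝ} (hb : 0 < b) (k : ℕ) {t : ℝ} (ht : 0 ≤ t) :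
    (1 + t) ^ k * exp (-b * t ^ 2) ≤
      k.factorial * exp (1 + (2 * b)⁻¹) * exp (-(b / 2) * t ^ 2) := by
  have hpow : (1 + t) ^ k ≤ k.factorial * exp (1 + t) := by
    have := pow_div_factorial_le_exp (1 + t) (by linarith) k
    rwa [div_le_iff₀ (by positivity), mul_comm] at this
  have hexp : 1 + t + -b * t ^ 2 ≤ 1 + (2 * b)⁻¹ + -(b / 2) * t ^ 2 := by
    have hsq : 0 ≤ b / 2 * (t - b⁻¹) ^ 2 := by positivity
    have hexpand : b / 2 * (t - b⁻¹) ^ 2 = b / 2 * t ^ 2 - t + (2 * b)⁻¹ := by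
      field_simp
      ring
    linarith
  calc (1 + t) ^ k * exp (-b * t ^ 2) ≤ k.factorial * exp (1 + t) * exp (-b * t ^ 2) := by
        gcongr
    _ ≤ k.factorial * exp (1 + (2 * b)⁻¹) * exp (-(b / 2) * t ^ 2) := by
        rw [mul_assoc, mul_assoc, ← exp_add, ← exp_add]
        gcongr

section InnerProductSpace

variable {V : Type*} [NormedAddCommGroup V] [InnerProductSpace ℝ V] {b : ℝ}

lemma hasFDerivAt_exp_neg_mul_sq_norm (x : V) :
    HasFDerivAt (fun x => exp (-b * ‖x‖ ^ 2)) (exp (-b * ‖x‖ ^ 2) • (-b) • 2 • innerSL ℝ x) x :=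
  ((hasStrictFDerivAt_norm_sq x).hasFDerivAt.const_mul (-b)).exp

lemma fderiv_exp_neg_mul_sq_norm_apply (x v : V) :
    fderiv ℝ (fun x => exp (-b * ‖x‖ ^ 2)) x v =
      -(2 * b) * inner ℝ x v * exp (-b * ‖x‖ ^ 2) := by
  rw [(hasFDerivAt_exp_neg_mul_sq_norm x).fderiv]
  simp only [_root_.smul_apply, innerSL_apply_apply, smul_eq_mul]
  ring

variable [FiniteDimensional ℝ V] [MeasurableSpace V] [BorelSpace V]

lemma integrable_exp_neg_mul_sq_norm (hb : 0 < b) :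
    Integrable fun x : V => exp (-b * ‖x‖ ^ 2) := by
  refine (GaussianFourier.integrable_cexp_neg_mul_sq_norm_add (V := V) (b := b)
    (by simpa) 0 0).norm.congr (.of_forall fun x => ?_)
  simp [Complex.norm_exp, ← Complex.ofReal_pow]

/-- Half of the Gaussian decay absorbs the polynomial growth. -/
lemma integrable_mul_exp_neg_mul_sq_norm_of_le (hb : 0 < b) {H : V → ℝ}
    (hH : AEStronglyMeasurable H) {C : ℝ} {k : ℕ} (hle : ∀ x, ‖H x‖ ≤ C * (1 + ‖x‖) ^ k) :
    Integrable fun x => H x * exp (-b * ‖x‖ ^ 2) := by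
  have hC : 0 ≤ C := by simpa using (norm_nonneg _).trans (hle 0)
  refine ((integrable_exp_neg_mul_sq_norm (half_pos hb)).const_mul
    (C * (k.factorial * exp (1 + (2 * b)⁻¹)))).mono' (hH.mul (by fun_prop))
    (.of_forall fun x => ?_)
  rw [norm_mul, norm_of_nonneg (exp_pos _).le]
  calc ‖H x‖ * exp (-b * ‖x‖ ^ 2) ≤ C * ((1 + ‖x‖) ^ k * exp (-b * ‖x‖ ^ 2)) := by
        rw [← mul_assoc]
        gcongr
        exact hle x
    _ ≤ C * (k.factorial * exp (1 + (2 * b)⁻¹) * exp (-(b / 2) * ‖x‖ ^ 2)) :=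
        mul_le_mul_of_nonneg_left (one_add_pow_mul_exp_neg_mul_sq_le hb k (norm_nonneg x)) hC
    _ = _ := by ring

namespace Function.HasTemperateGrowth

variable {F : V → ℝ}

lemma integrable_mul_exp_neg_mul_sq_norm (hF : F.HasTemperateGrowth) (hb : 0 < b) :
    Integrable fun x => F x * exp (-b * ‖x‖ ^ 2) := by
  obtain ⟨k, C, hC⟩ := hF.2 0
  exact integrable_mul_exp_neg_mul_sq_norm_of_le hb hF.1.continuous.aestronglyMeasurable
    fun x => by simpa using hC x

lemma integrable_fderiv_apply_mul_exp_neg_mul_sq_norm (hF : F.HasTemperateGrowth) (hb : 0 < b)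
    (v : V) : Integrable fun x => fderiv ℝ F x v * exp (-b * ‖x‖ ^ 2) := by
  obtain ⟨k, C, hC⟩ := hF.2 1
  refine integrable_mul_exp_neg_mul_sq_norm_of_le (C := C * ‖v‖) (k := k) hb
    ((hF.1.continuous_fderiv (by simp)).clm_apply continuous_const).aestronglyMeasurable
    fun x => ?_
  calc ‖fderiv ℝ F x v‖ ≤ ‖fderiv ℝ F x‖ * ‖v‖ := (fderiv ℝ F x).le_opNorm v
    _ ≤ C * (1 + ‖x‖) ^ k * ‖v‖ := by
        gcongr
        simpa [norm_iteratedFDeriv_one] using hC x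
    _ = C * ‖v‖ * (1 + ‖x‖) ^ k := by ring

end Function.HasTemperateGrowth

theorem integral_inner_mul_mul_exp_neg_mul_sq_norm (hb : 0 < b) {F : V → ℝ}
    (hF : F.HasTemperateGrowth) (v : V) :
    ∫ x, inner ℝ x v * F x * exp (-b * ‖x‖ ^ 2) =
      (2 * b)⁻¹ * ∫ x, fderiv ℝ F x v * exp (-b * ‖x‖ ^ 2) := by
  have hvF : (fun x => inner ℝ x v * F x).HasTemperateGrowth :=
    (hasTemperateGrowth_inner_left v).mul hF
  have hF_deriv_g : Integrable fun x => F x * fderiv ℝ (fun x => exp (-b * ‖x‖ ^ 2)) x v := by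
    simp only [fderiv_exp_neg_mul_sq_norm_apply]
    refine ((hvF.integrable_mul_exp_neg_mul_sq_norm hb).const_mul (-(2 * b))).congr
      (.of_forall fun x => ?_)
    ring
  have hibp := integral_mul_fderiv_eq_neg_fderiv_mul_of_integrable
    (hF.integrable_fderiv_apply_mul_exp_neg_mul_sq_norm hb v) hF_deriv_g
    (hF.integrable_mul_exp_neg_mul_sq_norm hb) (fun x _ => hF.1.differentiable (by simp) x)
    (fun x _ => (hasFDerivAt_exp_neg_mul_sq_norm x).differentiableAt)
  have hlhs : ∫ x, F x * (-(2 * b) * inner ℝ x v * exp (-b * ‖x‖ ^ 2)) =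
      -(2 * b) * ∫ x, inner ℝ x v * F x * exp (-b * ‖x‖ ^ 2) := by
    rw [← integral_const_mul]
    congr with x
    ring
  simp only [fderiv_exp_neg_mul_sq_norm_apply, hlhs] at hibp
  rw [eq_inv_mul_iff_mul_eq₀ (by positivity)]
  linarith

end InnerProductSpace

section EuclideanSpace

variable {ι : Type*} [Fintype ι] {b : ℝ}

@[fun_prop]
lemma hasTemperateGrowth_euclideanSpace_apply (i : ι) :
    HasTemperateGrowth fun x : EuclideanSpace ℝ ι => x i :=
  (EuclideanSpace.proj i).hasTemperateGrowth

variable [DecidableEq ι]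

lemma fderiv_euclideanSpace_apply_single (x : EuclideanSpace ℝ ι) (i j : ι) :
    fderiv ℝ (fun x : EuclideanSpace ℝ ι => x j) x (EuclideanSpace.single i 1) =
      if i = j then 1 else 0 := by
  simp only [(PiLp.hasFDerivAt_apply (𝕜 := ℝ) 2 x j).fderiv, PiLp.proj_apply,
    PiLp.single_apply, @eq_comm _ j i]

lemma fderiv_euclideanSpace_apply_mul_apply_mul_apply_single (x : EuclideanSpace ℝ ι)
    (i j k l : ι) :
    fderiv ℝ (fun x : EuclideanSpace ℝ ι => x j * x k * x l) x (EuclideanSpace.single i 1) =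
      (if i = j then 1 else 0) * (x k * x l) + (if i = k then 1 else 0) * (x j * x l)
        + (if i = l then 1 else 0) * (x j * x k) := by
  have hF : HasFDerivAt (fun x : EuclideanSpace ℝ ι => x j * x k * x l) _ x :=
    ((PiLp.hasFDerivAt_apply (𝕜 := ℝ) 2 x j).mul (PiLp.hasFDerivAt_apply 2 x k)).mul
      (PiLp.hasFDerivAt_apply 2 x l)
  simp only [hF.fderiv, _root_.add_apply, _root_.smul_apply,
    PiLp.proj_apply, PiLp.single_apply, Pi.mul_apply, smul_eq_mul, @eq_comm _ j i,
    @eq_comm _ k i, @eq_comm _ l i]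
  ring

theorem integral_apply_mul_mul_exp_neg_mul_sq_norm (hb : 0 < b) {F : EuclideanSpace ℝ ι → ℝ}
    (hF : F.HasTemperateGrowth) (i : ι) :
    ∫ x, x i * F x * exp (-b * ‖x‖ ^ 2) =
      (2 * b)⁻¹ * ∫ x, fderiv ℝ F x (EuclideanSpace.single i 1) * exp (-b * ‖x‖ ^ 2) := by
  simpa [EuclideanSpace.inner_single_right] using
    integral_inner_mul_mul_exp_neg_mul_sq_norm hb hF (EuclideanSpace.single i 1)

theorem integral_apply_mul_apply_mul_exp_neg_mul_sq_norm (hb : 0 < b) (i j : ι) :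
    ∫ x : EuclideanSpace ℝ ι, x i * x j * exp (-b * ‖x‖ ^ 2) =
      (2 * b)⁻¹ * (if i = j then 1 else 0) * ∫ x : EuclideanSpace ℝ ι, exp (-b * ‖x‖ ^ 2) := by
  rw [integral_apply_mul_mul_exp_neg_mul_sq_norm hb (by fun_prop) i]
  simp only [fderiv_euclideanSpace_apply_single, integral_const_mul, mul_assoc]

theorem integral_apply_mul_apply_mul_apply_mul_apply_mul_exp_neg_mul_sq_norm (hb : 0 < b)
    (i j k l : ι) :
    ∫ x : EuclideanSpace ℝ ι, x i * x j * x k * x l * exp (-b * ‖x‖ ^ 2) =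
      (2 * b)⁻¹ ^ 2 * ((if i = j then 1 else 0) * (if k = l then 1 else 0)
        + (if i = k then 1 else 0) * (if j = l then 1 else 0)
        + (if i = l then 1 else 0) * (if j = k then 1 else 0)) *
        ∫ x : EuclideanSpace ℝ ι, exp (-b * ‖x‖ ^ 2) := by
  have hint (p q : ι) : Integrable fun x : EuclideanSpace ℝ ι => x p * x q * exp (-b * ‖x‖ ^ 2) :=
    HasTemperateGrowth.integrable_mul_exp_neg_mul_sq_norm
      (F := fun x : EuclideanSpace ℝ ι => x p * x q) (by fun_prop) hb
  have hkl_jl : Integrable fun x : EuclideanSpace ℝ ι =>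
      (if i = j then 1 else 0) * (x k * x l * exp (-b * ‖x‖ ^ 2))
        + (if i = k then 1 else 0) * (x j * x l * exp (-b * ‖x‖ ^ 2)) :=
    ((hint k l).const_mul _).add ((hint j l).const_mul _)
  calc _ = ∫ x : EuclideanSpace ℝ ι, x i * (x j * x k * x l) * exp (-b * ‖x‖ ^ 2) := by
        simp only [mul_assoc]
    _ = (2 * b)⁻¹ * ∫ x : EuclideanSpace ℝ ι,
          (if i = j then 1 else 0) * (x k * x l * exp (-b * ‖x‖ ^ 2))
          + (if i = k then 1 else 0) * (x j * x l * exp (-b * ‖x‖ ^ 2))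
          + (if i = l then 1 else 0) * (x j * x k * exp (-b * ‖x‖ ^ 2)) := by
        rw [integral_apply_mul_mul_exp_neg_mul_sq_norm hb (F := fun x => x j * x k * x l)
          (by fun_prop) i]
        congr with x
        rw [fderiv_euclideanSpace_apply_mul_apply_mul_apply_single]
        ring
    _ = _ := by
        rw [integral_add hkl_jl ((hint j k).const_mul _),
          integral_add ((hint k l).const_mul _) ((hint j l).const_mul _),
          integral_const_mul, integral_const_mul, integral_const_mul,
          integral_apply_mul_apply_mul_exp_neg_mul_sq_norm hb,
          integral_apply_mul_apply_mul_exp_neg_mul_sq_norm hb,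
          integral_apply_mul_apply_mul_exp_neg_mul_sq_norm hb]
        ring

lemma sum_apply_mul_apply_mul_pairings (A B : Matrix ι ι ℝ) :
    ∑ i, ∑ j, ∑ k, ∑ l, A i j * B k l * ((if i = j then 1 else 0) * (if k = l then 1 else 0)
        + (if i = k then 1 else 0) * (if j = l then 1 else 0)
        + (if i = l then 1 else 0) * (if j = k then 1 else 0)) =
      A.trace * B.trace + (A * Bᵀ).trace + (A * B).trace := by
  simp only [mul_add, Finset.sum_add_distrib, mul_ite, mul_one, mul_zero, Finset.sum_ite_irrel,
    Finset.sum_ite_eq, Finset.mem_univ, if_true, Finset.sum_const_zero]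
  simp only [Matrix.trace, Matrix.diag, Matrix.mul_apply, Matrix.transpose_apply,
    Finset.sum_mul_sum]

theorem integral_quadForm_mul_exp_neg_mul_sq_norm (hb : 0 < b) (A : Matrix ι ι ℝ) :
    ∫ x : EuclideanSpace ℝ ι, (∑ i, ∑ j, x i * A i j * x j) * exp (-b * ‖x‖ ^ 2) =
      (2 * b)⁻¹ * A.trace * ∫ x : EuclideanSpace ℝ ι, exp (-b * ‖x‖ ^ 2) := by
  have hint (i j : ι) : Integrable fun x : EuclideanSpace ℝ ι =>
      A i j * (x i * x j * exp (-b * ‖x‖ ^ 2)) :=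
    (HasTemperateGrowth.integrable_mul_exp_neg_mul_sq_norm
      (F := fun x : EuclideanSpace ℝ ι => x i * x j) (by fun_prop) hb).const_mul _
  calc _ = ∫ x : EuclideanSpace ℝ ι, ∑ i, ∑ j, A i j * (x i * x j * exp (-b * ‖x‖ ^ 2)) := by
        congr with x
        simp only [Finset.sum_mul]
        exact Finset.sum_congr rfl fun i _ => Finset.sum_congr rfl fun j _ => by ring
    _ = _ := by
        simp only [integral_sum_sum hint, integral_const_mul,
          integral_apply_mul_apply_mul_exp_neg_mul_sq_norm hb, mul_ite, mul_one, mul_zero,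
          ite_mul, zero_mul, Finset.sum_ite_eq, Finset.mem_univ, if_true, Matrix.trace,
          Matrix.diag, Finset.mul_sum, Finset.sum_mul]
        exact Finset.sum_congr rfl fun i _ => by ring

theorem integral_quadForm_mul_quadForm_mul_exp_neg_mul_sq_norm (hb : 0 < b)
    (A B : Matrix ι ι ℝ) :
    ∫ x : EuclideanSpace ℝ ι,
        (∑ i, ∑ j, x i * A i j * x j) * (∑ k, ∑ l, x k * B k l * x l) * exp (-b * ‖x‖ ^ 2) =
      (2 * b)⁻¹ ^ 2 * (A.trace * B.trace + (A * Bᵀ).trace + (A * B).trace) *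
        ∫ x : EuclideanSpace ℝ ι, exp (-b * ‖x‖ ^ 2) := by
  have hint (i j k l : ι) : Integrable fun x : EuclideanSpace ℝ ι =>
      A i j * B k l * (x i * x j * x k * x l * exp (-b * ‖x‖ ^ 2)) :=
    (HasTemperateGrowth.integrable_mul_exp_neg_mul_sq_norm
      (F := fun x : EuclideanSpace ℝ ι => x i * x j * x k * x l) (by fun_prop) hb).const_mul _
  calc _ = ∫ x : EuclideanSpace ℝ ι, ∑ i, ∑ j, ∑ k, ∑ l,
          A i j * B k l * (x i * x j * x k * x l * exp (-b * ‖x‖ ^ 2)) := by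
        congr with x
        simp only [Finset.sum_mul]
        simp only [Finset.mul_sum]
        simp only [Finset.sum_mul]
        exact Finset.sum_congr rfl fun i _ => Finset.sum_congr rfl fun j _ =>
          Finset.sum_congr rfl fun k _ => Finset.sum_congr rfl fun l _ => by ring
    _ = _ := by
        rw [integral_sum_sum fun i j => integrable_finsetSum _ fun k _ =>
          integrable_finsetSum _ fun l _ => hint i j k l]
        simp only [integral_sum_sum (hint _ _), integral_const_mul,
          integral_apply_mul_apply_mul_apply_mul_apply_mul_exp_neg_mul_sq_norm hb,
          ← sum_apply_mul_apply_mul_pairings, Finset.sum_mul, Finset.mul_sum]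
        exact Finset.sum_congr rfl fun i _ => Finset.sum_congr rfl fun j _ =>
          Finset.sum_congr rfl fun k _ => Finset.sum_congr rfl fun l _ => by ring

theorem integral_centered_quadForm_mul_centered_quadForm_mul_exp_neg_mul_sq_norm (hb : 0 < b)
    (A B : Matrix ι ι ℝ) :
    ∫ x : EuclideanSpace ℝ ι,
        (A.trace - ∑ i, ∑ j, x i * A i j * x j) * (B.trace - ∑ i, ∑ j, x i * B i j * x j) *
          exp (-b * ‖x‖ ^ 2) =
      ((1 - (2 * b)⁻¹) ^ 2 * A.trace * B.trace +
          (2 * b)⁻¹ ^ 2 * ((A * Bᵀ).trace + (A * B).trace)) *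
        (π / b) ^ (Fintype.card ι / 2 : ℝ) := by
  have hQ (M : Matrix ι ι ℝ) : HasTemperateGrowth fun x : EuclideanSpace ℝ ι =>
      ∑ i, ∑ j, x i * M i j * x j := by
    fun_prop
  rw [integral_sub_mul_sub_mul _ _ (integrable_exp_neg_mul_sq_norm hb)
      ((hQ A).integrable_mul_exp_neg_mul_sq_norm hb) ((hQ B).integrable_mul_exp_neg_mul_sq_norm hb)
      (((hQ A).mul (hQ B)).integrable_mul_exp_neg_mul_sq_norm hb),
    integral_quadForm_mul_exp_neg_mul_sq_norm hb, integral_quadForm_mul_exp_neg_mul_sq_norm hb,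
    integral_quadForm_mul_quadForm_mul_exp_neg_mul_sq_norm hb,
    GaussianFourier.integral_rexp_neg_mul_sq_norm hb, finrank_euclideanSpace]
  ring

end EuclideanSpace

theorem gaussian_tilted_centered_quadratic_forms_general (d : ℕ)
    (α : ℝ) (hα : 0 < α)
    (A B : Matrix (Fin d) (Fin d) ℝ) (hB : B.IsSymm) :
    (2 * π) ^ (-(d : ℝ) / 2) *
      ∫ z : EuclideanSpace ℝ (Fin d),
        (A.trace - ∑ i, ∑ j, z i * A i j * z j) *
          (B.trace - ∑ i, ∑ j, z i * B i j * z j) *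
          Real.exp (-α * ‖z‖ ^ 2) * Real.exp (-‖z‖ ^ 2 / 2)
      = (1 + 2 * α) ^ (-((d : ℝ) / 2 + 2)) *
          (4 * α ^ 2 * A.trace * B.trace + 2 * (A * B).trace) := by
  have hb : 0 < α + 1 / 2 := by positivity
  have hc : 0 < 1 + 2 * α := by positivity
  have hexp (t : ℝ) : exp (-α * t) * exp (-t / 2) = exp (-(α + 1 / 2) * t) := by
    rw [← exp_add]
    ring_nf
  have hnorm : (2 * π) ^ (-(d : ℝ) / 2) * (π / (α + 1 / 2)) ^ ((d : ℝ) / 2) =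
      (1 + 2 * α) ^ (-(d : ℝ) / 2) := by
    rw [show π / (α + 1 / 2) = 2 * π * (1 + 2 * α)⁻¹ by field_simp; ring,
      mul_rpow (z := (d : ℝ) / 2) (by positivity) (by positivity), inv_rpow hc.le,
      ← rpow_neg hc.le, ← mul_assoc, ← rpow_add (by positivity), neg_div, neg_add_cancel,
      rpow_zero, one_mul]
  have hpow : (1 + 2 * α) ^ (-((d : ℝ) / 2 + 2)) =
      (2 * π) ^ (-(d : ℝ) / 2) * (π / (α + 1 / 2)) ^ ((d : ℝ) / 2) * ((1 + 2 * α) ^ 2)⁻¹ := by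
    rw [hnorm, neg_add, rpow_add hc, ← neg_div, rpow_neg hc.le, rpow_two]
  simp_rw [mul_assoc _ (exp _) (exp _), hexp]
  rw [integral_centered_quadForm_mul_centered_quadForm_mul_exp_neg_mul_sq_norm hb,
    Fintype.card_fin, hB.eq, hpow, show 2 * (α + 1 / 2) = 1 + 2 * α by ring]
  field_simp
  ring

/-- For symmetric `A`, `B` and a standard Gaussian vector `Z` in `ℝ^d`,
`E[(tr A − ZᵀAZ)(tr B − ZᵀBZ) exp(-α ZᵀZ)]
  = (1+2α)^{-(d/2+2)} (4α² tr(A) tr(B) + 2 tr(AB))`. -/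
theorem gaussian_tilted_centered_quadratic_forms (d : ℕ) (hd : 0 < d)
    (α : ℝ) (hα : 0 < α)
    (A B : Matrix (Fin d) (Fin d) ℝ) (hA : A.IsSymm) (hB : B.IsSymm) :
    (2 * π) ^ (-(d : ℝ) / 2) *
      ∫ z : EuclideanSpace ℝ (Fin d),
        (A.trace - ∑ i, ∑ j, z i * A i j * z j) *
          (B.trace - ∑ i, ∑ j, z i * B i j * z j) *
          Real.exp (-α * ‖z‖ ^ 2) * Real.exp (-‖z‖ ^ 2 / 2)
      = (1 + 2 * α) ^ (-((d : ℝ) / 2 + 2)) *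
          (4 * α ^ 2 * A.trace * B.trace + 2 * (A * B).trace) :=
  gaussian_tilted_centered_quadratic_forms_general d α hα A B hB
end

section
/- Let d be a positive integer, let Σ₀ be a symmetric positive definite real d×d matrix, set Ω := Σ₀^{-1}, and let α > −1. Then for every nonzero symmetric real d×d matrix H, (α²/(4(1+α))) (tr(ΩH))² + (1/(2(1+α))) tr(ΩHΩH) > 0. Consequently the symmetric bilinear form B(H₁, H₂) := (α²/(4(1+α))) tr(ΩH₁) tr(ΩH₂) + (1/(2(1+α))) tr(ΩH₁ΩH₂) on the vector space of symmetric d×d real matrices is positive definite; in particular, the d(d+1)/2 × d(d+1)/2 matrix M with entries M_{(kl),(rs)} = B(S_{kl}, S_{rs}), indexed by pairs 1 ≤ k ≤ l ≤ d and 1 ≤ r ≤ s ≤ d, is symmetric positive definite and invertible. -/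
/-!
Writing `Ω = Yᴴ Y` with `Y` invertible, `tr(ΩHΩH) = tr(KᴴK)` for `K = Y H Yᴴ`, which is nonzero
when `H` is; so the second term of the form is positive, while the first is a nonnegative
multiple of a square because `1 + α > 0`. The matrix `M` is the Gram matrix of this form in the
family `S_{kl}`, `k ≤ l`, and a combination `∑ c_{kl} S_{kl}` is a symmetric matrix whose
`(k, l)` entry is `c_{kl}`, so it vanishes only for `c = 0`.
-/

open Matrix

theorem dotProduct_mulVec_of_bilinForm {ι V : Type*} [Fintype ι] [AddCommGroup V] [Module ℝ V]
    (B : LinearMap.BilinForm ℝ V) (v : ι → V) (c : ι → ℝ) :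
    c ⬝ᵥ (of fun i j => B (v i) (v j)) *ᵥ c = B (∑ i, c i • v i) (∑ i, c i • v i) := by
  simp only [dotProduct, mulVec, of_apply, Finset.mul_sum, map_sum, map_smul, LinearMap.coe_sum,
    LinearMap.coe_smul, Finset.sum_apply, Pi.smul_apply, smul_eq_mul]
  rw [Finset.sum_comm]
  exact Finset.sum_congr rfl fun _ _ => Finset.sum_congr rfl fun _ _ => by ring

theorem posDef_of_bilinForm {ι V : Type*} [Fintype ι] [AddCommGroup V] [Module ℝ V]
    (B : LinearMap.BilinForm ℝ V) (hB : ∀ x y, B x y = B y x) (v : ι → V)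
    (hpos : ∀ c : ι → ℝ, c ≠ 0 → 0 < B (∑ i, c i • v i) (∑ i, c i • v i)) :
    (of fun i j => B (v i) (v j)).PosDef := by
  refine posDef_iff_dotProduct_mulVec.mpr ⟨?_, fun c hc => ?_⟩
  · ext i j
    exact hB _ _
  · rw [star_trivial, dotProduct_mulVec_of_bilinForm]
    exact hpos c hc

section TraceForm

variable {n : Type*} [Fintype n]

open scoped MatrixOrder in
theorem trace_mul_mul_mul_pos [DecidableEq n] {Ω H : Matrix n n ℝ} (hΩ : Ω.PosDef)
    (hH : H.IsSymm) (hH0 : H ≠ 0) : 0 < (Ω * H * Ω * H).trace := by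
  obtain ⟨Y, hY, rfl⟩ :=
    CStarAlgebra.isStrictlyPositive_iff_eq_star_mul_self.mp hΩ.isStrictlyPositive
  set K := Y * H * Yᴴ with hK
  have hK_herm : Kᴴ = K := by
    rw [hK, conjTranspose_mul, conjTranspose_mul, conjTranspose_conjTranspose,
      conjTranspose_eq_transpose_of_trivial, hH, Matrix.mul_assoc]
  have hK0 : K ≠ 0 := by
    rwa [hK, ← star_eq_conjTranspose, Ne, hY.star.mul_left_eq_zero, hY.mul_right_eq_zero]
  have htrace : (star Y * Y * H * (star Y * Y) * H).trace = (Kᴴ * K).trace := by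
    rw [hK_herm, hK, star_eq_conjTranspose]
    simp only [Matrix.mul_assoc]
    rw [trace_mul_comm]
    simp only [Matrix.mul_assoc]
  rw [htrace]
  exact (posSemidef_conjTranspose_mul_self K).trace_nonneg.lt_of_ne'
    (trace_conjTranspose_mul_self_eq_zero_iff.not.mpr hK0)

noncomputable def traceInfoForm (Ω : Matrix n n ℝ) (a b : ℝ) :
    LinearMap.BilinForm ℝ (Matrix n n ℝ) :=
  LinearMap.mk₂ ℝ
    (fun H₁ H₂ => a * (Ω * H₁).trace * (Ω * H₂).trace + b * (Ω * H₁ * Ω * H₂).trace)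
    (fun _ _ _ => by simp only [Matrix.mul_add, Matrix.add_mul, trace_add]; ring)
    (fun _ _ _ => by simp only [Matrix.mul_smul, Matrix.smul_mul, trace_smul, smul_eq_mul]; ring)
    (fun _ _ _ => by simp only [Matrix.mul_add, trace_add]; ring)
    (fun _ _ _ => by simp only [Matrix.mul_smul, trace_smul, smul_eq_mul]; ring)

theorem traceInfoForm_apply (Ω : Matrix n n ℝ) (a b : ℝ) (H₁ H₂ : Matrix n n ℝ) :
    traceInfoForm Ω a b H₁ H₂ =
      a * (Ω * H₁).trace * (Ω * H₂).trace + b * (Ω * H₁ * Ω * H₂).trace :=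
  rfl

theorem traceInfoForm_comm (Ω : Matrix n n ℝ) (a b : ℝ) (H₁ H₂ : Matrix n n ℝ) :
    traceInfoForm Ω a b H₁ H₂ = traceInfoForm Ω a b H₂ H₁ := by
  rw [traceInfoForm_apply, traceInfoForm_apply, Matrix.mul_assoc (Ω * H₂),
    trace_mul_comm (Ω * H₂), ← Matrix.mul_assoc]
  ring

theorem traceInfoForm_self (Ω : Matrix n n ℝ) (a b : ℝ) (H : Matrix n n ℝ) :
    traceInfoForm Ω a b H H = a * (Ω * H).trace ^ 2 + b * (Ω * H * Ω * H).trace := by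
  rw [traceInfoForm_apply]
  ring

theorem traceInfoForm_self_pos [DecidableEq n] {Ω H : Matrix n n ℝ} {a b : ℝ} (hΩ : Ω.PosDef)
    (ha : 0 ≤ a) (hb : 0 < b) (hH : H.IsSymm) (hH0 : H ≠ 0) : 0 < traceInfoForm Ω a b H H := by
  rw [traceInfoForm_self]
  exact add_pos_of_nonneg_of_pos (by positivity) (mul_pos hb (trace_mul_mul_mul_pos hΩ hH hH0))

end TraceForm

section SymmUnit

variable {n R : Type*} [DecidableEq n] [Semiring R]

def symmUnit (k l : n) : Matrix n n R :=
  if k = l then single k k 1 else single k l 1 + single l k 1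

theorem symmUnit_isSymm (k l : n) : (symmUnit k l : Matrix n n R).IsSymm := by
  unfold symmUnit
  split_ifs
  · exact transpose_single k k 1
  · simp [IsSymm, transpose_add, transpose_single, add_comm]

variable [LinearOrder n]

theorem symmUnit_apply_upper (p q : {q : n × n // q.1 ≤ q.2}) :
    (symmUnit p.1.1 p.1.2 : Matrix n n R) q.1.1 q.1.2 = if p = q then 1 else 0 := by
  obtain ⟨⟨k, l⟩, hkl⟩ := p
  obtain ⟨⟨r, s⟩, hrs⟩ := q
  unfold symmUnit
  split_ifs <;> grind [Matrix.add_apply]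

variable [Fintype n]

theorem isSymm_sum_smul_symmUnit (c : {q : n × n // q.1 ≤ q.2} → R) :
    (∑ p, c p • symmUnit p.1.1 p.1.2 : Matrix n n R).IsSymm := by
  simp only [IsSymm, transpose_sum, transpose_smul, (symmUnit_isSymm _ _).eq]

theorem sum_smul_symmUnit_apply (c : {q : n × n // q.1 ≤ q.2} → R)
    (q : {q : n × n // q.1 ≤ q.2}) :
    (∑ p, c p • symmUnit p.1.1 p.1.2 : Matrix n n R) q.1.1 q.1.2 = c q := by
  simp [Matrix.sum_apply, symmUnit_apply_upper]

theorem sum_smul_symmUnit_ne_zero {c : {q : n × n // q.1 ≤ q.2} → R} (hc : c ≠ 0) :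
    (∑ p, c p • symmUnit p.1.1 p.1.2 : Matrix n n R) ≠ 0 := by
  intro h
  exact hc (funext fun q => by simpa [h] using (sum_smul_symmUnit_apply c q).symm)

end SymmUnit

theorem vech_information_matrix_posDef_general (d : ℕ)
    (Sig₀ : Matrix (Fin d) (Fin d) ℝ) (hSig₀ : Sig₀.PosDef)
    (α : ℝ) (hα : -1 < α)
    (Om : Matrix (Fin d) (Fin d) ℝ) (hOm : Om = Sig₀⁻¹)
    (S : Fin d → Fin d → Matrix (Fin d) (Fin d) ℝ)
    (hS : ∀ k l, S k l =
      if k = l then Matrix.single k k (1 : ℝ)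
      else Matrix.single k l (1 : ℝ) + Matrix.single l k (1 : ℝ))
    (M : Matrix {q : Fin d × Fin d // q.1 ≤ q.2} {q : Fin d × Fin d // q.1 ≤ q.2} ℝ)
    (hM : ∀ x y : {q : Fin d × Fin d // q.1 ≤ q.2},
      M x y = α ^ 2 / (4 * (1 + α)) *
          (Om * S x.1.1 x.1.2).trace * (Om * S y.1.1 y.1.2).trace +
        1 / (2 * (1 + α)) *
          (Om * S x.1.1 x.1.2 * Om * S y.1.1 y.1.2).trace) :
    (∀ H : Matrix (Fin d) (Fin d) ℝ, H.IsSymm → H ≠ 0 →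
        0 < α ^ 2 / (4 * (1 + α)) * (Om * H).trace ^ 2 +
            1 / (2 * (1 + α)) * (Om * H * Om * H).trace) ∧
      M.PosDef ∧ IsUnit M := by
  obtain rfl : S = symmUnit := funext₂ hS
  have hΩ : Om.PosDef := hOm ▸ hSig₀.inv
  have h1α : 0 < 1 + α := by linarith
  set B := traceInfoForm Om (α ^ 2 / (4 * (1 + α))) (1 / (2 * (1 + α)))
  have hBpos : ∀ H, H.IsSymm → H ≠ 0 → 0 < B H H :=
    fun H => traceInfoForm_self_pos hΩ (by positivity) (by positivity)
  obtain rfl : M = of fun p q => B (symmUnit p.1.1 p.1.2) (symmUnit q.1.1 q.1.2) := by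
    ext p q
    exact hM p q
  have hMpd := posDef_of_bilinForm B (traceInfoForm_comm _ _ _) _ fun c hc =>
    hBpos _ (isSymm_sum_smul_symmUnit c) (sum_smul_symmUnit_ne_zero hc)
  exact ⟨fun H hH hH0 => traceInfoForm_self Om _ _ H ▸ hBpos H hH hH0, hMpd, hMpd.isUnit⟩

/-- Positive definiteness of the limiting information-type form for the
diffusion-matrix estimator: for `Ω = Sig₀⁻¹` with `Sig₀` symmetric positive
definite and `α > −1`, the form
`H ↦ (α²/(4(1+α))) (tr(ΩH))² + (1/(2(1+α))) tr(ΩHΩH)` is strictly positive on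
nonzero symmetric matrices; consequently the `vech`-indexed matrix
`M_{(kl),(rs)}` built from the basis matrices `S_{kl}` is symmetric positive
definite, hence invertible. -/
theorem vech_information_matrix_posDef (d : ℕ) (hd : 0 < d)
    (Sig₀ : Matrix (Fin d) (Fin d) ℝ) (hSig₀ : Sig₀.PosDef)
    (α : ℝ) (hα : -1 < α)
    (Om : Matrix (Fin d) (Fin d) ℝ) (hOm : Om = Sig₀⁻¹)
    (S : Fin d → Fin d → Matrix (Fin d) (Fin d) ℝ)
    (hS : ∀ k l, S k l =
      if k = l then Matrix.single k k (1 : ℝ)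
      else Matrix.single k l (1 : ℝ) + Matrix.single l k (1 : ℝ))
    (M : Matrix {q : Fin d × Fin d // q.1 ≤ q.2} {q : Fin d × Fin d // q.1 ≤ q.2} ℝ)
    (hM : ∀ x y : {q : Fin d × Fin d // q.1 ≤ q.2},
      M x y = α ^ 2 / (4 * (1 + α)) *
          (Om * S x.1.1 x.1.2).trace * (Om * S y.1.1 y.1.2).trace +
        1 / (2 * (1 + α)) *
          (Om * S x.1.1 x.1.2 * Om * S y.1.1 y.1.2).trace) :
    (∀ H : Matrix (Fin d) (Fin d) ℝ, H.IsSymm → H ≠ 0 →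
        0 < α ^ 2 / (4 * (1 + α)) * (Om * H).trace ^ 2 +
            1 / (2 * (1 + α)) * (Om * H * Om * H).trace) ∧
      M.PosDef ∧ IsUnit M :=
  vech_information_matrix_posDef_general d Sig₀ hSig₀ α hα Om hOm S hS M hM
end

section
/- Let d be a positive integer, α > 0, let Σ₀ be a symmetric positive definite real d×d matrix, and let Λ₀ := Σ₀^{1/2} be its unique symmetric positive definite square root. Define, for every symmetric positive definite d×d matrix Σ, Ψ(Σ) := (1+α)^{-d/2} det(Σ)^{-α/2} − (1 + 1/α) det(Σ)^{-α/2} det( I_d + α Λ₀ Σ^{-1} Λ₀ )^{-1/2}. Then Σ₀ is the unique minimizer of Ψ over the set of symmetric positive definite d×d matrices: Ψ(Σ₀) ≤ Ψ(Σ) for all symmetric positive definite Σ, with equality only if Σ = Σ₀. -/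
open Matrix Real

/-!
Put `M = Λ₀ S⁻¹ Λ₀`: it is positive definite, `M = 1` iff `S = Σ₀`, `det S = det Σ₀ / det M`
and `det (1 + α M) = ∏ (1 + α μᵢ)` over the eigenvalues `μᵢ` of `M`. The weighted AM-GM
inequality `(1 + α) μ^(α/(1+α)) ≤ 1 + α μ`, strict unless `μ = 1`, gives
`det (1 + α M) > (1 + α)^d (det M)^(α/(1+α))` when `M ≠ 1`. Since `Ψ S` increases with
`det (1 + α M)`, replacing it by this bound strictly lowers `Ψ S`, and what remains of
`Ψ S - Ψ Σ₀` is a positive multiple of `x - (1 + 1/α) x^(α/(1+α)) + 1/α`, where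
`x = (det M)^(α/2)`; this is nonnegative by the same AM-GM inequality.
-/

lemma one_add_mul_rpow_le_one_add_mul {a x : ℝ} (ha : 0 ≤ a) (hx : 0 ≤ x) :
    (1 + a) * x ^ (a / (1 + a)) ≤ 1 + a * x := by
  have h := geom_mean_le_arith_mean2_weighted (p₂ := 1) (by positivity : 0 ≤ a / (1 + a))
    (by positivity : 0 ≤ 1 / (1 + a)) hx zero_le_one (by field_simp; ring)
  rw [one_rpow, mul_one] at h
  calc (1 + a) * x ^ (a / (1 + a)) ≤ (1 + a) * (a / (1 + a) * x + 1 / (1 + a) * 1) := by gcongr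
    _ = 1 + a * x := by field_simp; ring

lemma one_add_mul_rpow_lt_one_add_mul {a x : ℝ} (ha : 0 < a) (hx : 0 ≤ x) (hx1 : x ≠ 1) :
    (1 + a) * x ^ (a / (1 + a)) < 1 + a * x := by
  have h := (geom_mean_lt_arith_mean2_weighted_iff_of_pos (p₂ := 1)
    (by positivity : 0 < a / (1 + a)) (by positivity : 0 < 1 / (1 + a)) hx zero_le_one
    (by field_simp; ring)).2 hx1
  rw [one_rpow, mul_one] at h
  calc (1 + a) * x ^ (a / (1 + a)) < (1 + a) * (a / (1 + a) * x + 1 / (1 + a) * 1) := by gcongr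
    _ = 1 + a * x := by field_simp; ring

namespace Matrix

variable {n : Type*} [Fintype n] [DecidableEq n]

lemma mul_nonsing_inv_mul_eq_one_iff {R : Type*} [CommRing R] {L S : Matrix n n R}
    (hL : IsUnit L) (hS : IsUnit S) : L * S⁻¹ * L = 1 ↔ S = L * L := by
  obtain ⟨u, rfl⟩ := hL
  obtain ⟨v, rfl⟩ := hS
  rw [← coe_units_inv, ← Units.val_mul, ← Units.val_mul, ← Units.val_mul, ← Units.val_one,
    Units.val_inj, Units.val_inj, mul_assoc, mul_eq_one_iff_eq_inv, _root_.mul_inv_rev, inv_inv,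
    eq_inv_mul_iff_mul_eq, eq_comm]

lemma det_mul_nonsing_inv_mul {K : Type*} [Field K] (L S : Matrix n n K) :
    (L * S⁻¹ * L).det = (L * L).det / S.det := by
  rw [det_mul, det_mul, det_mul, det_nonsing_inv, Ring.inverse_eq_inv', div_eq_mul_inv]; ring

lemma det_rpow_neg_eq_mul_det_mul_nonsing_inv_mul_rpow {L S : Matrix n n ℝ} (hL : L.det ≠ 0)
    (hS : 0 < S.det) (r : ℝ) :
    S.det ^ (-r) = (L * L).det ^ (-r) * (L * S⁻¹ * L).det ^ r := by
  have hLL : 0 < (L * L).det := by rw [det_mul]; exact mul_self_pos.mpr hL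
  have := rpow_pos_of_pos hLL r
  rw [det_mul_nonsing_inv_mul, div_rpow hLL.le hS.le, rpow_neg hLL.le, rpow_neg hS.le]
  field_simp

lemma det_one_add_smul_one {R : Type*} [CommRing R] (a : R) :
    (1 + a • (1 : Matrix n n R)).det = (1 + a) ^ Fintype.card n := by
  rw [show (1 : Matrix n n R) + a • 1 = (1 + a) • 1 by rw [add_smul, one_smul], det_smul,
    det_one, mul_one]

namespace IsHermitian

variable {M : Matrix n n ℝ}

lemma det_one_add_smul (hM : M.IsHermitian) (a : ℝ) :
    (1 + a • M).det = ∏ i, (1 + a * hM.eigenvalues i) := by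
  have hU := mem_unitaryGroup_iff.mp hM.eigenvectorUnitary.2
  conv_lhs => rw [hM.spectral_theorem,
    ← map_one (Unitary.conjStarAlgAut ℝ _ hM.eigenvectorUnitary), ← map_smul, ← map_add]
  rw [Unitary.conjStarAlgAut_apply, det_mul_right_comm, hU, one_mul, ← diagonal_one,
    ← diagonal_smul, diagonal_add, det_diagonal]
  rfl

lemma eq_one_of_eigenvalues_eq_one (hM : M.IsHermitian) (h : ∀ i, hM.eigenvalues i = 1) :
    M = 1 := by
  have h1 : (RCLike.ofReal ∘ hM.eigenvalues : n → ℝ) = 1 := funext fun i => by simp [h i]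
  rw [hM.spectral_theorem, h1, Pi.one_def, diagonal_one, map_one]

end IsHermitian

end Matrix

lemma Matrix.PosDef.one_add_pow_mul_det_rpow_lt_det_one_add_smul {n : Type*} [Fintype n]
    [DecidableEq n] {M : Matrix n n ℝ} (hM : M.PosDef) (hM1 : M ≠ 1) {a : ℝ} (ha : 0 < a) :
    (1 + a) ^ Fintype.card n * M.det ^ (a / (1 + a)) < (1 + a • M).det := by
  have hμ := hM.eigenvalues_pos
  obtain ⟨j, hj⟩ : ∃ j, hM.1.eigenvalues j ≠ 1 := by
    by_contra! h
    exact hM1 (hM.1.eq_one_of_eigenvalues_eq_one h)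
  rw [hM.1.det_one_add_smul, hM.1.det_eq_prod_eigenvalues]
  simp only [RCLike.ofReal_real_eq_id, id]
  rw [← finsetProd_rpow _ _ fun i _ => (hμ i).le, ← Finset.card_univ, ← Finset.prod_const,
    ← Finset.prod_mul_distrib]
  exact Finset.prod_lt_prod (fun i _ => by have := hμ i; positivity)
    (fun i _ => one_add_mul_rpow_le_one_add_mul ha.le (hμ i).le)
    ⟨j, Finset.mem_univ j, one_add_mul_rpow_lt_one_add_mul ha (hμ j).le hj⟩

/-- `Ψ S` in terms of `c = (det S)^(-α/2)` and `D = det (1 + α Λ₀ S⁻¹ Λ₀)`. -/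
noncomputable def dpdCriterion (a : ℝ) (k : ℕ) (c D : ℝ) : ℝ :=
  (1 + a) ^ (-(k : ℝ) / 2) * c - (1 + 1 / a) * c * D ^ (-(1 : ℝ) / 2)

lemma dpdCriterion_strictMonoOn {a c : ℝ} (k : ℕ) (ha : 0 < a) (hc : 0 < c) :
    StrictMonoOn (dpdCriterion a k c) (Set.Ioi 0) := by
  intro D₁ hD₁ D₂ _ h
  have := rpow_lt_rpow_of_neg hD₁ h (by norm_num : -(1 : ℝ) / 2 < 0)
  unfold dpdCriterion
  gcongr

lemma dpdCriterion_one_add_pow_le {a c m : ℝ} (k : ℕ) (ha : 0 < a) (hc : 0 ≤ c)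
    (hm : 0 < m) :
    dpdCriterion a k c ((1 + a) ^ k) ≤
      dpdCriterion a k (c * m ^ (a / 2)) ((1 + a) ^ k * m ^ (a / (1 + a))) := by
  unfold dpdCriterion
  set A : ℝ := (1 + a) ^ (-(k : ℝ) / 2)
  set x := m ^ (a / 2)
  have hA : ((1 + a) ^ k : ℝ) ^ (-(1 : ℝ) / 2) = A := by
    rw [← rpow_natCast, ← rpow_mul (by positivity)]; congr 1; ring
  have hD : ((1 + a) ^ k * m ^ (a / (1 + a))) ^ (-(1 : ℝ) / 2) * x = A * x ^ (a / (1 + a)) := by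
    rw [mul_rpow (by positivity) (by positivity), hA, ← rpow_mul hm.le, ← rpow_mul hm.le,
      mul_assoc, ← rpow_add hm]
    congr 2; field_simp; ring
  have hamgm : (1 + 1 / a) * x ^ (a / (1 + a)) ≤ x + 1 / a := by
    have := one_add_mul_rpow_le_one_add_mul ha.le (by positivity : 0 ≤ x)
    calc (1 + 1 / a) * x ^ (a / (1 + a)) = (1 + a) * x ^ (a / (1 + a)) / a := by field_simp; ring
      _ ≤ (1 + a * x) / a := by gcongr
      _ = x + 1 / a := by field_simp; ring
  calc A * c - (1 + 1 / a) * c * ((1 + a) ^ k : ℝ) ^ (-(1 : ℝ) / 2)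
        = A * c * (x - (x + 1 / a)) := by rw [hA]; ring
    _ ≤ A * c * (x - (1 + 1 / a) * x ^ (a / (1 + a))) := by gcongr
    _ = _ := by linear_combination (1 + 1 / a) * c * hD

theorem dpd_limit_criterion_unique_minimizer_general (d : ℕ)
    (α : ℝ) (hα : 0 < α)
    (Sig₀ Lam₀ : Matrix (Fin d) (Fin d) ℝ)
    (hSig₀ : Sig₀.PosDef) (hLam₀ : Lam₀.PosDef) (hsq : Lam₀ * Lam₀ = Sig₀)
    (Ψ : Matrix (Fin d) (Fin d) ℝ → ℝ)
    (hΨ : ∀ S : Matrix (Fin d) (Fin d) ℝ, S.PosDef →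
      Ψ S = (1 + α) ^ (-(d : ℝ) / 2) * S.det ^ (-(α / 2)) -
        (1 + 1 / α) * S.det ^ (-(α / 2)) *
          ((1 : Matrix (Fin d) (Fin d) ℝ) + α • (Lam₀ * S⁻¹ * Lam₀)).det ^
            (-(1 : ℝ) / 2)) :
    ∀ S : Matrix (Fin d) (Fin d) ℝ, S.PosDef →
      Ψ Sig₀ ≤ Ψ S ∧ (Ψ S = Ψ Sig₀ → S = Sig₀) := by
  intro S hS
  rcases eq_or_ne S Sig₀ with rfl | hne
  · exact ⟨le_rfl, fun _ => rfl⟩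
  set M := Lam₀ * S⁻¹ * Lam₀
  have hM : M.PosDef := by
    simpa only [hLam₀.1.eq] using hS.inv.conjTranspose_mul_mul_same
      (mulVec_injective_iff_isUnit.mpr hLam₀.isUnit)
  have hM1 : M ≠ 1 :=
    fun h => hne (((mul_nonsing_inv_mul_eq_one_iff hLam₀.isUnit hS.isUnit).1 h).trans hsq)
  have hΨ₀ : Ψ Sig₀ = dpdCriterion α d (Sig₀.det ^ (-(α / 2))) ((1 + α) ^ d) := by
    rw [hΨ Sig₀ hSig₀, (mul_nonsing_inv_mul_eq_one_iff hLam₀.isUnit hSig₀.isUnit).2 hsq.symm,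
      det_one_add_smul_one, Fintype.card_fin]
    rfl
  have hΨS :
      Ψ S = dpdCriterion α d (Sig₀.det ^ (-(α / 2)) * M.det ^ (α / 2)) (1 + α • M).det := by
    rw [hΨ S hS, det_rpow_neg_eq_mul_det_mul_nonsing_inv_mul_rpow hLam₀.det_pos.ne' hS.det_pos,
      hsq]
    rfl
  have hm := hM.det_pos
  have hc₀ := hSig₀.det_pos
  have hlt : Ψ Sig₀ < Ψ S := by
    rw [hΨ₀, hΨS]
    have hdet := hM.one_add_pow_mul_det_rpow_lt_det_one_add_smul hM1 hα
    rw [Fintype.card_fin] at hdet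
    have hpos : (0 : ℝ) < (1 + α) ^ d * M.det ^ (α / (1 + α)) := by positivity
    exact (dpdCriterion_one_add_pow_le d hα (by positivity) hm).trans_lt
      (dpdCriterion_strictMonoOn d hα (by positivity) hpos (hpos.trans hdet) hdet)
  exact ⟨hlt.le, fun h => absurd h hlt.ne'⟩

/-- The limiting DPD criterion `Ψ` for the diffusion matrix is uniquely
minimized at the true value `Σ₀`, where `Λ₀` is the symmetric positive
definite square root of `Σ₀`. -/
theorem dpd_limit_criterion_unique_minimizer (d : ℕ) (hd : 0 < d)
    (α : ℝ) (hα : 0 < α)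
    (Sig₀ Lam₀ : Matrix (Fin d) (Fin d) ℝ)
    (hSig₀ : Sig₀.PosDef) (hLam₀ : Lam₀.PosDef) (hsq : Lam₀ * Lam₀ = Sig₀)
    (Ψ : Matrix (Fin d) (Fin d) ℝ → ℝ)
    (hΨ : ∀ S : Matrix (Fin d) (Fin d) ℝ, S.PosDef →
      Ψ S = (1 + α) ^ (-(d : ℝ) / 2) * S.det ^ (-(α / 2)) -
        (1 + 1 / α) * S.det ^ (-(α / 2)) *
          ((1 : Matrix (Fin d) (Fin d) ℝ) + α • (Lam₀ * S⁻¹ * Lam₀)).det ^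
            (-(1 : ℝ) / 2)) :
    ∀ S : Matrix (Fin d) (Fin d) ℝ, S.PosDef →
      Ψ Sig₀ ≤ Ψ S ∧ (Ψ S = Ψ Sig₀ → S = Sig₀) :=
  dpd_limit_criterion_unique_minimizer_general d α hα Sig₀ Lam₀ hSig₀ hLam₀ hsq Ψ hΨ
end

section
/- Let d be a positive integer and α > 0. Define, for every symmetric positive definite real d×d matrix M, Φ(M) := (1+α)^{-d/2} det(M)^{-α/2} − (1 + 1/α) det(M)^{-α/2} det( I_d + α M^{-1} )^{-1/2}. Then the identity matrix I_d is the unique minimizer of Φ over the set of symmetric positive definite d×d matrices: Φ(I_d) ≤ Φ(M) for all symmetric positive definite M, with equality only if M = I_d. -/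
open Matrix Real

/-!
Diagonalising `M` with eigenvalues `tᵢ > 0` turns the second term of `Φ` into
`∏ tᵢ^(-α/2) (1 + α/tᵢ)^(-1/2)`. Each factor is at most `(1+α)^(-1/2) tᵢ^(-α²/(2(1+α)))`, with
equality only at `tᵢ = 1`: after squaring and inverting this is the weighted AM–GM inequality
`(1+α) t^(1/(1+α)) ≤ t + α`. Hence `Φ(M) ≥ c P^(-α/2) - (1+1/α) c P^(-α²/(2(1+α)))` with
`c = (1+α)^(-d/2)` and `P = det M`, and a second application of the same AM–GM inequality, now with
weight `α/(1+α)`, bounds this from below by `-c/α = Φ(I)`.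
-/

section RpowInequalities

variable {p t α : ℝ}

lemma mul_rpow_inv_le_add_sub_one (hp : 1 ≤ p) (ht : 0 ≤ t) : p * t ^ p⁻¹ ≤ t + (p - 1) := by
  have hu : (t ^ p⁻¹) ^ p = t := rpow_inv_rpow ht (by positivity)
  have := one_add_mul_self_le_rpow_one_add (s := t ^ p⁻¹ - 1) (by linarith [rpow_nonneg ht p⁻¹]) hp
  rw [add_sub_cancel, hu] at this
  linarith

lemma mul_rpow_inv_lt_add_sub_one (hp : 1 < p) (ht : 0 ≤ t) (ht1 : t ≠ 1) :
    p * t ^ p⁻¹ < t + (p - 1) := by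
  have hu : (t ^ p⁻¹) ^ p = t := rpow_inv_rpow ht (by positivity)
  have hu1 : t ^ p⁻¹ - 1 ≠ 0 := fun h => ht1 <| by rw [← hu, sub_eq_zero.mp h, one_rpow]
  have := one_add_mul_self_lt_rpow_one_add (by linarith [rpow_nonneg ht p⁻¹]) hu1 hp
  rw [add_sub_cancel, hu] at this
  linarith

lemma rpow_mul_one_add_div_rpow_eq (hα : 0 ≤ α) (ht : 0 < t) :
    t ^ (-(α / 2)) * (1 + α / t) ^ (-(1 : ℝ) / 2) = (t ^ (α - 1) * (t + α)) ^ (-(1 : ℝ) / 2) := by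
  have h : t ^ (α - 1) * (t + α) = t ^ α * (1 + α / t) := by
    rw [rpow_sub_one ht.ne']; field_simp
  rw [h, mul_rpow (by positivity) (by positivity), ← rpow_mul ht.le]
  ring_nf

lemma one_add_rpow_mul_rpow_eq (hα : 0 ≤ α) (ht : 0 < t) :
    (1 + α) ^ (-(1 : ℝ) / 2) * t ^ (-(α ^ 2 / (2 * (1 + α)))) =
      (t ^ (α - 1) * ((1 + α) * t ^ (1 + α)⁻¹)) ^ (-(1 : ℝ) / 2) := by
  rw [mul_left_comm, ← rpow_add ht, mul_rpow (by positivity) (by positivity), ← rpow_mul ht.le]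
  congr 2
  field_simp
  ring

lemma rpow_mul_one_add_div_rpow_le (hα : 0 ≤ α) (ht : 0 < t) :
    t ^ (-(α / 2)) * (1 + α / t) ^ (-(1 : ℝ) / 2) ≤
      (1 + α) ^ (-(1 : ℝ) / 2) * t ^ (-(α ^ 2 / (2 * (1 + α)))) := by
  rw [rpow_mul_one_add_div_rpow_eq hα ht, one_add_rpow_mul_rpow_eq hα ht]
  refine rpow_le_rpow_of_nonpos (by positivity) (mul_le_mul_of_nonneg_left ?_ (by positivity))
    (by norm_num)
  simpa using mul_rpow_inv_le_add_sub_one (p := 1 + α) (by linarith) ht.le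

lemma rpow_mul_one_add_div_rpow_lt (hα : 0 < α) (ht : 0 < t) (ht1 : t ≠ 1) :
    t ^ (-(α / 2)) * (1 + α / t) ^ (-(1 : ℝ) / 2) <
      (1 + α) ^ (-(1 : ℝ) / 2) * t ^ (-(α ^ 2 / (2 * (1 + α)))) := by
  rw [rpow_mul_one_add_div_rpow_eq hα.le ht, one_add_rpow_mul_rpow_eq hα.le ht]
  refine rpow_lt_rpow_of_neg (by positivity) (mul_lt_mul_of_pos_left ?_ (by positivity))
    (by norm_num)
  simpa using mul_rpow_inv_lt_add_sub_one (p := 1 + α) (by linarith) ht.le ht1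

lemma one_add_inv_mul_rpow_le (hα : 0 < α) (ht : 0 ≤ t) :
    (1 + 1 / α) * t ^ (-(α ^ 2 / (2 * (1 + α)))) ≤ t ^ (-(α / 2)) + 1 / α := by
  have h := mul_rpow_inv_le_add_sub_one (p := 1 + 1 / α) (by simp [hα.le])
    (rpow_nonneg ht (-(α / 2)))
  rwa [← rpow_mul ht, add_sub_cancel_left,
    show -(α / 2) * (1 + 1 / α)⁻¹ = -(α ^ 2 / (2 * (1 + α))) by field_simp; ring] at h

end RpowInequalities

namespace Matrix

variable {𝕜 n : Type*} [RCLike 𝕜] [Fintype n] [DecidableEq n]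

lemma IsHermitian.det_cfc {A : Matrix n n 𝕜} (hA : A.IsHermitian) (f : ℝ → ℝ) :
    (cfc f A).det = ∏ i, (f (hA.eigenvalues i) : 𝕜) := by
  rw [hA.cfc_eq, IsHermitian.cfc, Unitary.conjStarAlgAut_apply, det_mul, det_mul, mul_right_comm,
    ← det_mul, Unitary.mul_star_self_of_mem hA.eigenvectorUnitary.2, det_one, one_mul, det_diagonal]
  rfl

lemma IsHermitian.eq_one_of_eigenvalues_eq_one_s14 {A : Matrix n n 𝕜} (hA : A.IsHermitian)
    (h : ∀ i, hA.eigenvalues i = 1) : A = 1 := by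
  rw [hA.spectral_theorem, show (RCLike.ofReal ∘ hA.eigenvalues : n → 𝕜) = fun _ => 1 from
    funext fun i => by simp [h], diagonal_one, map_one]

lemma PosDef.one_add_smul_inv_eq_cfc {M : Matrix n n ℝ} (hM : M.PosDef) (α : ℝ) :
    1 + α • M⁻¹ = cfc (fun x => 1 + α * x⁻¹) M := by
  have hU : IsUnit M := (isUnit_iff_isUnit_det M).mpr hM.det_pos.ne'.isUnit
  have hS : IsSelfAdjoint M := hM.isHermitian
  have hfin := M.finite_real_spectrum (𝕜 := ℝ)
  rw [cfc_add _ _ _ (hfin.continuousOn _) (hfin.continuousOn _), cfc_const_one ℝ M,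
    cfc_const_mul _ _ _ (hfin.continuousOn _), cfc_ringInverse_id _ hU, nonsing_inv_eq_ringInverse]

lemma PosDef.det_one_add_smul_inv {M : Matrix n n ℝ} (hM : M.PosDef) (α : ℝ) :
    (1 + α • M⁻¹).det = ∏ i, (1 + α / hM.isHermitian.eigenvalues i) := by
  simp only [hM.one_add_smul_inv_eq_cfc, hM.isHermitian.det_cfc, div_eq_mul_inv]
  rfl

lemma IsHermitian.det_eq_prod_eigenvalues_real {A : Matrix n n ℝ} (hA : A.IsHermitian) :
    A.det = ∏ i, hA.eigenvalues i := by
  simpa using hA.det_eq_prod_eigenvalues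

variable {α : ℝ} {M : Matrix n n ℝ}

lemma PosDef.det_rpow_mul_det_one_add_smul_inv_rpow (hα : 0 ≤ α) (hM : M.PosDef) :
    M.det ^ (-(α / 2)) * (1 + α • M⁻¹).det ^ (-(1 : ℝ) / 2) =
      ∏ i, (hM.isHermitian.eigenvalues i ^ (-(α / 2)) *
        (1 + α / hM.isHermitian.eigenvalues i) ^ (-(1 : ℝ) / 2)) := by
  have ht := hM.eigenvalues_pos
  rw [hM.isHermitian.det_eq_prod_eigenvalues_real, hM.det_one_add_smul_inv,
    ← Real.finsetProd_rpow _ _ (fun i _ => (ht i).le),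
    ← Real.finsetProd_rpow _ _ (fun i _ => by have := ht i; positivity), ← Finset.prod_mul_distrib]

lemma PosDef.one_add_rpow_mul_det_rpow (hα : 0 ≤ α) (hM : M.PosDef) :
    (1 + α) ^ (-(Fintype.card n : ℝ) / 2) * M.det ^ (-(α ^ 2 / (2 * (1 + α)))) =
      ∏ i, ((1 + α) ^ (-(1 : ℝ) / 2) *
        hM.isHermitian.eigenvalues i ^ (-(α ^ 2 / (2 * (1 + α))))) := by
  rw [Finset.prod_mul_distrib, Finset.prod_const, Finset.card_univ,
    ← rpow_natCast ((1 + α) ^ _), ← rpow_mul (by positivity),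
    hM.isHermitian.det_eq_prod_eigenvalues_real,
    Real.finsetProd_rpow _ _ (fun i _ => (hM.eigenvalues_pos i).le)]
  ring_nf

lemma PosDef.det_rpow_mul_det_one_add_smul_inv_rpow_le (hα : 0 ≤ α) (hM : M.PosDef) :
    M.det ^ (-(α / 2)) * (1 + α • M⁻¹).det ^ (-(1 : ℝ) / 2) ≤
      (1 + α) ^ (-(Fintype.card n : ℝ) / 2) * M.det ^ (-(α ^ 2 / (2 * (1 + α)))) := by
  have ht := hM.eigenvalues_pos
  rw [hM.det_rpow_mul_det_one_add_smul_inv_rpow hα, hM.one_add_rpow_mul_det_rpow hα]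
  exact Finset.prod_le_prod (fun i _ => by have := ht i; positivity)
    fun i _ => rpow_mul_one_add_div_rpow_le hα (ht i)

lemma PosDef.det_rpow_mul_det_one_add_smul_inv_rpow_lt (hα : 0 < α) (hM : M.PosDef)
    (hM1 : M ≠ 1) :
    M.det ^ (-(α / 2)) * (1 + α • M⁻¹).det ^ (-(1 : ℝ) / 2) <
      (1 + α) ^ (-(Fintype.card n : ℝ) / 2) * M.det ^ (-(α ^ 2 / (2 * (1 + α)))) := by
  have ht := hM.eigenvalues_pos
  obtain ⟨j, hj⟩ : ∃ j, hM.isHermitian.eigenvalues j ≠ 1 := by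
    by_contra! h
    exact hM1 (hM.isHermitian.eq_one_of_eigenvalues_eq_one_s14 h)
  rw [hM.det_rpow_mul_det_one_add_smul_inv_rpow hα.le, hM.one_add_rpow_mul_det_rpow hα.le]
  exact Finset.prod_lt_prod (fun i _ => by have := ht i; positivity)
    (fun i _ => rpow_mul_one_add_div_rpow_le hα.le (ht i))
    ⟨j, Finset.mem_univ j, rpow_mul_one_add_div_rpow_lt hα (ht j) hj⟩

end Matrix

section ReducedCriterion

variable {n : Type*} [Fintype n] [DecidableEq n] {α : ℝ} {M : Matrix n n ℝ}

noncomputable def reducedCriterion (α : ℝ) (M : Matrix n n ℝ) : ℝ :=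
  (1 + α) ^ (-(Fintype.card n : ℝ) / 2) * M.det ^ (-(α / 2)) -
    (1 + 1 / α) * M.det ^ (-(α / 2)) * (1 + α • M⁻¹).det ^ (-(1 : ℝ) / 2)

lemma reducedCriterion_one (hα : 0 ≤ α) :
    reducedCriterion α (1 : Matrix n n ℝ) = -((1 + α) ^ (-(Fintype.card n : ℝ) / 2) / α) := by
  have hdet : (1 + α • (1 : Matrix n n ℝ)⁻¹).det ^ (-(1 : ℝ) / 2) =
      (1 + α) ^ (-(Fintype.card n : ℝ) / 2) := by
    rw [inv_one, show (1 : Matrix n n ℝ) + α • 1 = (1 + α) • 1 by rw [add_smul, one_smul],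
      det_smul, det_one, mul_one, ← rpow_natCast, ← rpow_mul (by positivity)]
    ring_nf
  rw [reducedCriterion, hdet, det_one, one_rpow]
  ring

lemma reducedCriterion_one_le_sub (hα : 0 < α) (hM : M.PosDef) :
    reducedCriterion α (1 : Matrix n n ℝ) ≤
      (1 + α) ^ (-(Fintype.card n : ℝ) / 2) * M.det ^ (-(α / 2)) -
        (1 + 1 / α) * ((1 + α) ^ (-(Fintype.card n : ℝ) / 2) *
          M.det ^ (-(α ^ 2 / (2 * (1 + α))))) := by
  set c := (1 + α) ^ (-(Fintype.card n : ℝ) / 2)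
  rw [reducedCriterion_one hα.le]
  calc -(c / α) = c * M.det ^ (-(α / 2)) - c * (M.det ^ (-(α / 2)) + 1 / α) := by ring
    _ ≤ c * M.det ^ (-(α / 2)) - c * ((1 + 1 / α) * M.det ^ (-(α ^ 2 / (2 * (1 + α))))) := by
      gcongr
      exact one_add_inv_mul_rpow_le hα hM.det_pos.le
    _ = _ := by ring

lemma reducedCriterion_one_le (hα : 0 < α) (hM : M.PosDef) :
    reducedCriterion α (1 : Matrix n n ℝ) ≤ reducedCriterion α M := by
  refine (reducedCriterion_one_le_sub hα hM).trans ?_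
  rw [reducedCriterion, mul_assoc _ (M.det ^ _)]
  exact sub_le_sub_left (mul_le_mul_of_nonneg_left
    (hM.det_rpow_mul_det_one_add_smul_inv_rpow_le hα.le) (by positivity)) _

lemma reducedCriterion_one_lt (hα : 0 < α) (hM : M.PosDef) (hM1 : M ≠ 1) :
    reducedCriterion α (1 : Matrix n n ℝ) < reducedCriterion α M := by
  refine (reducedCriterion_one_le_sub hα hM).trans_lt ?_
  rw [reducedCriterion, mul_assoc _ (M.det ^ _)]
  exact sub_lt_sub_left (mul_lt_mul_of_pos_left
    (hM.det_rpow_mul_det_one_add_smul_inv_rpow_lt hα hM1) (by positivity)) _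

end ReducedCriterion

theorem reduced_dpd_criterion_unique_minimizer_general (d : ℕ)
    (α : ℝ) (hα : 0 < α)
    (Φ : Matrix (Fin d) (Fin d) ℝ → ℝ)
    (hΦ : ∀ M : Matrix (Fin d) (Fin d) ℝ, M.PosDef →
      Φ M = (1 + α) ^ (-(d : ℝ) / 2) * M.det ^ (-(α / 2)) -
        (1 + 1 / α) * M.det ^ (-(α / 2)) *
          ((1 : Matrix (Fin d) (Fin d) ℝ) + α • M⁻¹).det ^ (-(1 : ℝ) / 2)) :
    ∀ M : Matrix (Fin d) (Fin d) ℝ, M.PosDef →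
      Φ (1 : Matrix (Fin d) (Fin d) ℝ) ≤ Φ M ∧
        (Φ M = Φ (1 : Matrix (Fin d) (Fin d) ℝ) → M = 1) := by
  have hΦ_eq : ∀ M : Matrix (Fin d) (Fin d) ℝ, M.PosDef → Φ M = reducedCriterion α M :=
    fun M hM => by rw [hΦ M hM, reducedCriterion, Fintype.card_fin]
  intro M hM
  rw [hΦ_eq 1 PosDef.one, hΦ_eq M hM]
  refine ⟨reducedCriterion_one_le hα hM, fun h => ?_⟩
  by_contra hM1
  exact (reducedCriterion_one_lt hα hM hM1).ne' h

/-- The reduced criterion `Φ(M) = (1+α)^{-d/2} det(M)^{-α/2}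
− (1+1/α) det(M)^{-α/2} det(I + αM⁻¹)^{-1/2}` is uniquely minimized at the
identity matrix over symmetric positive definite matrices. -/
theorem reduced_dpd_criterion_unique_minimizer (d : ℕ) (hd : 0 < d)
    (α : ℝ) (hα : 0 < α)
    (Φ : Matrix (Fin d) (Fin d) ℝ → ℝ)
    (hΦ : ∀ M : Matrix (Fin d) (Fin d) ℝ, M.PosDef →
      Φ M = (1 + α) ^ (-(d : ℝ) / 2) * M.det ^ (-(α / 2)) -
        (1 + 1 / α) * M.det ^ (-(α / 2)) *
          ((1 : Matrix (Fin d) (Fin d) ℝ) + α • M⁻¹).det ^ (-(1 : ℝ) / 2)) :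
    ∀ M : Matrix (Fin d) (Fin d) ℝ, M.PosDef →
      Φ (1 : Matrix (Fin d) (Fin d) ℝ) ≤ Φ M ∧
        (Φ M = Φ (1 : Matrix (Fin d) (Fin d) ℝ) → M = 1) :=
  reduced_dpd_criterion_unique_minimizer_general d α hα Φ hΦ
end
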